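/- In Subway Shuffle, if a vertex v has the property that every edge of color c incident to v is directed out of v, and v is not occupied by a token of color c, then in every configuration reachable from the current one, v is never occupied by a token of color c. (A token of color c can only arrive at v by traversing a c-colored edge directed into v, and an edge incident to v is reversed only when a token moves into or out of v.) -/

import Mathlib

/-- A Subway Shuffle configuration: a finite directed graph with colored edges
and a partial assignment of colored tokens to vertices. -/
structure Subway (V E C : Type) where
  src : E → V
  dst : E → V
  edgeColor : E → C
  token : V → Option C

/-- A legal move along edge `e`: a token of the edge's color sits on `src e`,
the head `dst e` is unoccupied; the token moves to the head and the edge is reversed. -/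
def MoveVia {V E C : Type} [DecidableEq V] [DecidableEq E]
    (e : E) (c c' : Subway V E C) : Prop :=
  c.token (c.src e) = some (c.edgeColor e) ∧
  c.token (c.dst e) = none ∧
  c'.token = (fun w => if w = c.dst e then some (c.edgeColor e)
                       else if w = c.src e then none else c.token w) ∧
  c'.src = Function.update c.src e (c.dst e) ∧
  c'.dst = Function.update c.dst e (c.src e) ∧
  c'.edgeColor = c.edgeColor

/-- A legal move: a legal move along some edge. -/
def Move {V E C : Type} [DecidableEq V] [DecidableEq E]
    (c c' : Subway V E C) : Prop :=
  ∃ e, MoveVia e c c'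

/-!
An edge incident to `v` changes direction only when a token moves into or out of `v`
along it. While every `col`-edge at `v` points away from `v`, a `col`-token could only
leave `v`, and there is none there; so no `col`-edge at `v` is ever traversed and the
situation is frozen forever.
-/

namespace Subway

variable {V E C : Type}

def OutgoingAt (c : Subway V E C) (v : V) (col : C) : Prop :=
  ∀ e, c.edgeColor e = col → (c.src e = v ∨ c.dst e = v) → c.src e = v

def Shielded (c : Subway V E C) (v : V) (col : C) : Prop :=
  c.OutgoingAt v col ∧ c.token v ≠ some col

end Subway

section

variable {V E C : Type} [DecidableEq V] [DecidableEq E] {c c' : Subway V E C} {v : V} {col : C}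
  {e : E}

theorem MoveVia.not_incident_of_shielded (hm : MoveVia e c c') (hc : c.Shielded v col)
    (hcol : c.edgeColor e = col) : ¬(c.src e = v ∨ c.dst e = v) := by
  intro hinc
  apply hc.2
  rw [← hc.1 e hcol hinc, hm.1, hcol]

theorem MoveVia.outgoingAt (hm : MoveVia e c c') (hc : c.Shielded v col) :
    c'.OutgoingAt v col := by
  obtain ⟨hsrc, hdst, hcolor⟩ := hm.2.2.2
  intro f hcol hinc
  rw [hcolor] at hcol
  rw [hsrc, hdst] at hinc
  rw [hsrc]
  by_cases hfe : f = e
  · subst hfe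
    simp only [Function.update_self] at hinc
    exact absurd hinc.symm (hm.not_incident_of_shielded hc hcol)
  · simp only [Function.update_of_ne hfe] at hinc ⊢
    exact hc.1 f hcol hinc

theorem MoveVia.token_ne (hm : MoveVia e c c') (hc : c.Shielded v col) :
    c'.token v ≠ some col := by
  rw [hm.2.2.1]
  dsimp only
  split_ifs with hdst hsrc
  · rw [Ne, Option.some_inj]
    intro hcol
    exact hm.not_incident_of_shielded hc hcol (Or.inr hdst.symm)
  · exact Option.some_ne_none _ |>.symm
  · exact hc.2

theorem Move.shielded (hm : Move c c') (hc : c.Shielded v col) : c'.Shielded v col :=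
  let ⟨_, hme⟩ := hm
  ⟨hme.outgoingAt hc, hme.token_ne hc⟩

end

/-- If every edge of color `col` incident to `v` is directed out of `v`, and
`v` is not occupied by a token of color `col`, then in every reachable
configuration `v` is never occupied by a token of color `col`. -/
theorem subway_never_occupied {V E C : Type} [DecidableEq V] [DecidableEq E]
    (c₀ c : Subway V E C) (v : V) (col : C)
    (hout : ∀ e, c₀.edgeColor e = col → (c₀.src e = v ∨ c₀.dst e = v) → c₀.src e = v)
    (hv : c₀.token v ≠ some col)
    (h : Relation.ReflTransGen Move c₀ c) :
    c.token v ≠ some col := by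
  have hshielded : c.Shielded v col := by
    induction h with
    | refl => exact ⟨hout, hv⟩
    | tail _ hm ih => exact hm.shielded ih
  exact hshielded.2
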